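/- arXiv:1004.2837 — 6 statements merged into one kernel-verified Lean document; each statement's English description precedes it below -/
import Mathlib

section
/- Let a = (α₁, α₂) and b = (β₁, β₂) be elements of ℤ² with gcd(α₁, α₂) = 1, gcd(β₁, β₂) = 1, and det(a, b) > 0. Then there exist a natural number n and a finite sequence c₀, c₁, …, c_{n+1} of elements of ℤ² such that c₀ = a, c_{n+1} = b, det(c_j, c_{j+1}) = 1 for every j with 0 ≤ j ≤ n, and det(c_{k−1}, c_{k+1}) > 1 for every k with 1 ≤ k ≤ n. -/
/-!
Induction on `d = det2 a b`. If `d > 1`, pick `c` with `det2 a c = 1`; shifting `c` by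
multiples of `a` puts `det2 c b` in `(0, d]`, and `det2 c b = d` would force `b = d • (c - a)`,
contradicting primitivity of `b`. A chain from `c` to `b` prepended by `a` is then a chain from
`a` to `b`: by the Plücker relation its first step `w` after `c` satisfies
`det2 w b = det2 a w * det2 c b - d`, so `0 ≤ det2 w b` and `det2 c b < d` give `det2 a w > 1`.
-/

/-- The 2×2 determinant of two vectors in `ℤ × ℤ`. -/
def det2 (u v : ℤ × ℤ) : ℤ := u.1 * v.2 - u.2 * v.1

@[simp]
lemma det2_self (u : ℤ × ℤ) : det2 u u = 0 := by
  unfold det2; ring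

lemma det2_add_smul_left (u v w : ℤ × ℤ) (k : ℤ) :
    det2 (u + k • w) v = det2 u v + k * det2 w v := by
  simp only [det2, Prod.fst_add, Prod.snd_add, Prod.smul_fst, Prod.smul_snd, smul_eq_mul]
  ring

lemma det2_add_smul_right (u v w : ℤ × ℤ) (k : ℤ) :
    det2 u (v + k • w) = det2 u v + k * det2 u w := by
  simp only [det2, Prod.fst_add, Prod.snd_add, Prod.smul_fst, Prod.smul_snd, smul_eq_mul]
  ring

lemma det2_plucker (a c w b : ℤ × ℤ) :
    det2 a c * det2 w b = det2 a w * det2 c b - det2 a b * det2 c w := by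
  unfold det2; ring

lemma isCoprime_iff_exists_det2_eq_one {a : ℤ × ℤ} :
    IsCoprime a.1 a.2 ↔ ∃ c, det2 a c = 1 := by
  constructor
  · rintro ⟨u, v, h⟩
    exact ⟨(-v, u), by unfold det2; linear_combination h⟩
  · rintro ⟨c, h⟩
    exact ⟨c.2, -c.1, by unfold det2 at h; linear_combination h⟩

lemma isCoprime_of_det2_eq_one {a c : ℤ × ℤ} (h : det2 a c = 1) : IsCoprime c.1 c.2 :=
  ⟨-a.2, a.1, by unfold det2 at h; linear_combination h⟩

lemma det2_dvd_of_det2_eq {a b c : ℤ × ℤ} (hac : det2 a c = 1) (hcb : det2 c b = det2 a b) :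
    det2 a b ∣ b.1 ∧ det2 a b ∣ b.2 := by
  refine ⟨⟨c.1 - a.1, ?_⟩, ⟨c.2 - a.2, ?_⟩⟩ <;> unfold det2 at *
  · linear_combination -b.1 * hac - a.1 * hcb
  · linear_combination -b.2 * hac - a.2 * hcb

lemma exists_det2_eq_one_and_det2_mem_Ioc {a b : ℤ × ℤ} (ha : IsCoprime a.1 a.2)
    (hab : 0 < det2 a b) : ∃ c, det2 a c = 1 ∧ 0 < det2 c b ∧ det2 c b ≤ det2 a b := by
  obtain ⟨c, hac⟩ := isCoprime_iff_exists_det2_eq_one.mp ha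
  refine ⟨c + (-((det2 c b - 1) / det2 a b)) • a, ?_, ?_, ?_⟩
  · rw [det2_add_smul_right, hac, det2_self, mul_zero, add_zero]
  all_goals
    rw [det2_add_smul_left]
    have h₀ := Int.emod_nonneg (det2 c b - 1) hab.ne'
    have h₁ := Int.emod_lt_of_pos (det2 c b - 1) hab
    rw [Int.emod_def] at h₀ h₁
    linarith

lemma exists_det2_eq_one_and_det2_mem_Ioo {a b : ℤ × ℤ} (ha : IsCoprime a.1 a.2)
    (hb : IsCoprime b.1 b.2) (hab : 1 < det2 a b) :
    ∃ c, det2 a c = 1 ∧ 0 < det2 c b ∧ det2 c b < det2 a b := by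
  obtain ⟨c, hac, hcb_pos, hcb_le⟩ := exists_det2_eq_one_and_det2_mem_Ioc ha (zero_lt_one.trans hab)
  refine ⟨c, hac, hcb_pos, lt_of_le_of_ne hcb_le fun hcb => ?_⟩
  obtain ⟨hd₁, hd₂⟩ := det2_dvd_of_det2_eq hac hcb
  rcases Int.isUnit_iff.mp (hb.isUnit_of_dvd' hd₁ hd₂) with h | h <;> omega

lemma one_lt_det2_of_knee {a b c w : ℤ × ℤ} (hac : det2 a c = 1) (hcw : det2 c w = 1)
    (hwb : 0 ≤ det2 w b) (hcb : 0 < det2 c b) (hcb_lt : det2 c b < det2 a b) :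
    1 < det2 a w := by
  have h := det2_plucker a c w b
  rw [hac, hcw] at h
  nlinarith

structure IsUnimodularChain (c : ℕ → ℤ × ℤ) (n : ℕ) : Prop where
  det2_succ : ∀ j, j ≤ n → det2 (c j) (c (j + 1)) = 1
  one_lt_det2 : ∀ k, 1 ≤ k → k ≤ n → 1 < det2 (c (k - 1)) (c (k + 1))

def prependSeq {α : Type*} (a : α) (c : ℕ → α) : ℕ → α
  | 0 => a
  | j + 1 => c j

@[simp] lemma prependSeq_zero {α : Type*} (a : α) (c : ℕ → α) : prependSeq a c 0 = a := rfl

@[simp] lemma prependSeq_succ {α : Type*} (a : α) (c : ℕ → α) (j : ℕ) :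
    prependSeq a c (j + 1) = c j := rfl

lemma isUnimodularChain_prependSeq_const {a b : ℤ × ℤ} (hab : det2 a b = 1) :
    IsUnimodularChain (prependSeq a fun _ => b) 0 where
  det2_succ j hj := by rw [Nat.le_zero.mp hj]; exact hab
  one_lt_det2 _ h₁ h₂ := by omega

lemma IsUnimodularChain.prependSeq {c : ℕ → ℤ × ℤ} {n : ℕ} (hc : IsUnimodularChain c n)
    {a : ℤ × ℤ} (h₀ : det2 a (c 0) = 1) (h₁ : 1 < det2 a (c 1)) :
    IsUnimodularChain (prependSeq a c) (n + 1) where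
  det2_succ
    | 0, _ => h₀
    | j + 1, hj => hc.det2_succ j (by omega)
  one_lt_det2
    | 1, _, _ => h₁
    | k + 2, _, hk => hc.one_lt_det2 (k + 1) (by omega) (by omega)

theorem exists_isUnimodularChain {a b : ℤ × ℤ} (ha : IsCoprime a.1 a.2)
    (hb : IsCoprime b.1 b.2) (hab : 0 < det2 a b) :
    ∃ (n : ℕ) (c : ℕ → ℤ × ℤ), c 0 = a ∧ c (n + 1) = b ∧ IsUnimodularChain c n ∧
      ∀ j, 0 ≤ det2 (c j) b := by
  rcases (show det2 a b = 1 ∨ 1 < det2 a b by omega) with hab_eq | hab_gt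
  · refine ⟨0, prependSeq a fun _ => b, rfl, rfl, isUnimodularChain_prependSeq_const hab_eq, ?_⟩
    rintro (_ | j)
    · exact hab.le
    · simp
  · obtain ⟨c, hac, hcb, hcb_lt⟩ := exists_det2_eq_one_and_det2_mem_Ioo ha hb hab_gt
    obtain ⟨n, w, rfl, hwn, hw, hwb⟩ :=
      exists_isUnimodularChain (isCoprime_of_det2_eq_one hac) hb hcb
    refine ⟨n + 1, prependSeq a w, rfl, hwn, hw.prependSeq hac ?_, ?_⟩
    · exact one_lt_det2_of_knee hac (hw.det2_succ 0 n.zero_le) (hwb 1) hcb hcb_lt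
    · rintro (_ | j)
      · exact hab.le
      · exact hwb j
termination_by (det2 a b).toNat
decreasing_by omega

/-- Existence part of the arithmetic sub-lemma: given `a, b ∈ ℤ²` with coprime
coordinates and `det(a,b) > 0`, there is a finite sequence `c₀, …, c_{n+1}`
from `a` to `b` with consecutive determinants `1` and `det(c_{k-1}, c_{k+1}) > 1`. -/
theorem exists_chain_of_coprime_det_pos (a b : ℤ × ℤ)
    (ha : Int.gcd a.1 a.2 = 1) (hb : Int.gcd b.1 b.2 = 1)
    (hab : 0 < det2 a b) :
    ∃ (n : ℕ) (c : ℕ → ℤ × ℤ),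
      c 0 = a ∧ c (n + 1) = b ∧
      (∀ j, j ≤ n → det2 (c j) (c (j + 1)) = 1) ∧
      (∀ k, 1 ≤ k → k ≤ n → 1 < det2 (c (k - 1)) (c (k + 1))) := by
  obtain ⟨n, c, hc₀, hcn, hc, -⟩ := exists_isUnimodularChain
    (Int.isCoprime_iff_gcd_eq_one.mpr ha) (Int.isCoprime_iff_gcd_eq_one.mpr hb) hab
  exact ⟨n, c, hc₀, hcn, hc.det2_succ, hc.one_lt_det2⟩
end

section
/- Let a, b ∈ ℤ² with det(a, b) = 1. If c₀, …, c_{n+1} is a finite sequence of elements of ℤ² with c₀ = a, c_{n+1} = b, det(c_j, c_{j+1}) = 1 for every 0 ≤ j ≤ n, and det(c_{k−1}, c_{k+1}) > 1 for every 1 ≤ k ≤ n, then n = 0; that is, the sequence is exactly (a, b). -/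
lemma det2_plucker_s2 (u v w x : ℤ × ℤ) :
    det2 u v * det2 w x - det2 u w * det2 v x + det2 u x * det2 v w = 0 := by
  simp only [det2]; ring

/-- Special case `det(a,b) = 1` of the arithmetic sub-lemma: any admissible
sequence from `a` to `b` has `n = 0`, i.e. it is exactly `(a, b)`. -/
theorem chain_of_det_eq_one (a b : ℤ × ℤ) (hab : det2 a b = 1)
    (n : ℕ) (c : ℕ → ℤ × ℤ)
    (hc0 : c 0 = a) (hcl : c (n + 1) = b)
    (h1 : ∀ j, j ≤ n → det2 (c j) (c (j + 1)) = 1)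
    (h2 : ∀ k, 1 ≤ k → k ≤ n → 1 < det2 (c (k - 1)) (c (k + 1))) :
    n = 0 := by
  set t : ℕ → ℤ := fun k => det2 (c 0) (c k) with ht
  have key : ∀ k, k ≤ n → t (k + 1) ≥ t k + 1 ∧ t k ≥ (k : ℤ) := by
    intro k
    induction k with
    | zero =>
      intro _
      have h0 : t 0 = 0 := by simp only [ht, det2]; ring
      have h1' : t 1 = 1 := h1 0 (Nat.zero_le n)
      constructor <;> simp [h0, h1']
    | succ k ih =>
      intro hk
      have hk' : k ≤ n := Nat.le_of_succ_le hk
      obtain ⟨ih1, ih2⟩ := ih hk'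
      have hd : 1 < det2 (c k) (c (k + 2)) := by
        have := h2 (k + 1) (Nat.le_add_left 1 k) hk
        simpa using this
      have e1 : det2 (c (k + 1)) (c (k + 2)) = 1 := by
        have := h1 (k + 1) hk
        simpa using this
      have e2 : det2 (c k) (c (k + 1)) = 1 := h1 k hk'
      have pl := det2_plucker_s2 (c 0) (c k) (c (k + 1)) (c (k + 2))
      rw [e1, e2] at pl
      -- pl : t k * 1 - t (k+1) * d + t (k+2) * 1 = 0
      have hrec : t (k + 2) = det2 (c k) (c (k + 2)) * t (k + 1) - t k := by
        simp only [ht]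
        linarith [pl]
      have hk1 : t (k + 1) ≥ (k : ℤ) + 1 := by linarith
      constructor
      · nlinarith [hrec, hd, ih1, hk1]
      · push_cast; linarith
  obtain ⟨hA, hB⟩ := key n le_rfl
  have hfin : t (n + 1) = 1 := by rw [ht]; simp only; rw [hc0, hcl]; exact hab
  have : (n : ℤ) ≤ 0 := by linarith
  exact_mod_cast Nat.le_zero.mp (by exact_mod_cast this)
end

section
/- Let u = (ν₁, ν₂) and v = (υ₁, υ₂) be elements of ℤ² and let λ, μ be positive rational numbers such that det(u, v) > 0, ν₁ + ν₂ > 1, υ₁ + υ₂ > 1, and (1, 1) = λ·u + μ·v in ℚ². Then det(u, v) > 1. -/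
section Cramer

variable {R : Type*} [CommRing R] (u v : ℤ × ℤ) {l m x y : R}

theorem mul_det2_eq_of_eq_lincomb_left (h1 : x = l * u.1 + m * v.1)
    (h2 : y = l * u.2 + m * v.2) : l * det2 u v = x * v.2 - y * v.1 := by
  rw [h1, h2, det2]
  push_cast
  ring

theorem mul_det2_eq_of_eq_lincomb_right (h1 : x = l * u.1 + m * v.1)
    (h2 : y = l * u.2 + m * v.2) : m * det2 u v = y * u.1 - x * u.2 := by
  rw [h1, h2, det2]
  push_cast
  ring

end Cramer

theorem two_mul_det2 (u v : ℤ × ℤ) :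
    2 * det2 u v = (v.2 - v.1) * (u.1 + u.2) + (u.1 - u.2) * (v.1 + v.2) := by
  rw [det2]
  ring

theorem one_lt_det2_of_sub_pos {u v : ℤ × ℤ} (hv' : 0 < v.2 - v.1) (hu' : 0 < u.1 - u.2)
    (hu : 1 < u.1 + u.2) (hv : 1 < v.1 + v.2) : 1 < det2 u v := by
  nlinarith [two_mul_det2 u v]

/-- The auxiliary claim (◊): if `u, v ∈ ℤ²` satisfy `det(u,v) > 0`,
`ν₁ + ν₂ > 1`, `υ₁ + υ₂ > 1` and `(1,1) = λ·u + μ·v` with `λ, μ ∈ ℚ_{>0}`,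
then `det(u,v) > 1`. -/
theorem det_gt_one_of_one_one_in_parallelogram (u v : ℤ × ℤ) (l m : ℚ)
    (hl : 0 < l) (hm : 0 < m)
    (hdet : 0 < det2 u v)
    (hu : 1 < u.1 + u.2) (hv : 1 < v.1 + v.2)
    (h1 : (1 : ℚ) = l * (u.1 : ℚ) + m * (v.1 : ℚ))
    (h2 : (1 : ℚ) = l * (u.2 : ℚ) + m * (v.2 : ℚ)) :
    1 < det2 u v := by
  have hd : (0 : ℚ) < det2 u v := by exact_mod_cast hdet
  have hv' : 0 < v.2 - v.1 := by
    have h := mul_det2_eq_of_eq_lincomb_left u v h1 h2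
    rw [one_mul, one_mul] at h
    exact_mod_cast h ▸ mul_pos hl hd
  have hu' : 0 < u.1 - u.2 := by
    have h := mul_det2_eq_of_eq_lincomb_right u v h1 h2
    rw [one_mul, one_mul] at h
    exact_mod_cast h ▸ mul_pos hm hd
  exact one_lt_det2_of_sub_pos hv' hu' hu hv
end

section
/- Let l ≥ 1, let e₁, …, e_l ∈ ℤ, let M be an abelian group, and let c₀, c₁, …, c_{l+1} ∈ M satisfy c_{j−1} + e_j·c_j + c_{j+1} = 0 for every j = 1, …, l (with integer scalar multiplication in M). Let A be the l×l symmetric tridiagonal integer matrix whose diagonal entries are e₁, …, e_l, whose entries immediately above and below the diagonal are all 1, and whose other entries are 0. Then there exists b ∈ ℤ such that c₀ = ((−1)^l · det A)·c_l + b·c_{l+1}. -/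
def tri (n : ℕ) (f : ℕ → ℤ) : Matrix (Fin n) (Fin n) ℤ :=
  Matrix.of fun i j =>
    if (i : ℕ) = (j : ℕ) then f i
    else if (i : ℕ) + 1 = (j : ℕ) ∨ (j : ℕ) + 1 = (i : ℕ) then 1 else 0

lemma tri_det_rec (n : ℕ) (f : ℕ → ℤ) :
    (tri (n + 2) f).det =
      f 0 * (tri (n + 1) (fun k => f (k + 1))).det
        - (tri n (fun k => f (k + 2))).det := by
  have hval : ∀ k : Fin (n+1),
      (((Fin.succ 0 : Fin (n+2)).succAbove k : Fin (n+2)) : ℕ)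
        = if (k : ℕ) = 0 then 0 else (k : ℕ) + 1 := by
    intro k
    simp only [Fin.succAbove, Fin.lt_def, Fin.coe_castSucc, Fin.val_succ]
    split_ifs <;> simp_all <;> omega <;> omega
  rw [Matrix.det_succ_row_zero, Fin.sum_univ_succ, Fin.sum_univ_succ]
  have h0 : ((tri (n+2) f).submatrix Fin.succ (Fin.succAbove 0))
      = tri (n+1) (fun k => f (k+1)) := by
    ext i j
    simp only [Matrix.submatrix_apply, tri, Matrix.of_apply, Fin.succAbove_zero, Fin.val_succ]
    split_ifs <;> first | rfl | omega
  have htail : ∀ j : Fin n, tri (n+2) f 0 (Fin.succ (Fin.succ j)) = 0 := by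
    intro j
    simp only [tri, Matrix.of_apply, Fin.val_succ, Fin.val_zero]
    split_ifs <;> simp only [not_true, not_false_iff, false_or, or_false] at * <;> first | rfl | exact ‹False›.elim | omega
  set B := (tri (n+2) f).submatrix Fin.succ ((Fin.succ 0 : Fin (n+2)).succAbove) with hBdef
  have hB0 : ∀ i : Fin n, B (Fin.succ i) 0 = 0 := by
    intro i
    simp only [hBdef, Matrix.submatrix_apply, tri, Matrix.of_apply, Fin.val_succ, hval,
      Fin.val_zero]
    split_ifs <;> simp only [not_true, not_false_iff, false_or, or_false] at * <;> first | rfl | exact ‹False›.elim | omega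
  have hB00 : B 0 0 = 1 := by
    simp only [hBdef, Matrix.submatrix_apply, tri, Matrix.of_apply, Fin.val_succ, hval,
      Fin.val_zero]
    split_ifs <;> simp only [not_true, not_false_iff, false_or, or_false] at * <;> first | rfl | exact ‹False›.elim | omega
  have hBsub : B.submatrix Fin.succ Fin.succ = tri n (fun k => f (k+2)) := by
    ext i j
    simp only [hBdef, Matrix.submatrix_apply, tri, Matrix.of_apply, Fin.val_succ, hval]
    split_ifs <;> simp only [not_true, not_false_iff, false_or, or_false] at * <;> first | rfl | exact ‹False›.elim | omega
  have h1 : B.det = (tri n (fun k => f (k + 2))).det := by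
    rw [Matrix.det_succ_column_zero, Fin.sum_univ_succ]
    simp only [hB0, mul_zero, zero_mul, Finset.sum_const_zero, add_zero, hB00,
      Fin.val_zero, pow_zero, one_mul, mul_one, Fin.succAbove_zero, hBsub]
  rw [h0]
  rw [h1]
  simp only [htail, mul_zero, zero_mul, Finset.sum_const_zero, add_zero]
  simp [tri]
  ring

/-- The Cramer-rule computation of Proposition "det" (iii): if the elements
`c₀, …, c_{l+1}` of an abelian group satisfy `c_{j-1} + e_j·c_j + c_{j+1} = 0`
for `j = 1, …, l`, and `A` is the symmetric tridiagonal matrix with diagonal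
`e₁, …, e_l` and off-diagonal entries `1`, then
`c₀ = ((-1)^l · det A)·c_l + b·c_{l+1}` for some integer `b`. -/
theorem c_zero_eq_det_smul (l : ℕ) (hl : 1 ≤ l) (e : ℕ → ℤ)
    {M : Type*} [AddCommGroup M] (c : ℕ → M)
    (hrec : ∀ j, 1 ≤ j → j ≤ l → c (j - 1) + e j • c j + c (j + 1) = 0)
    (A : Matrix (Fin l) (Fin l) ℤ)
    (hA : ∀ i j : Fin l, A i j =
      if (i : ℕ) = (j : ℕ) then e ((i : ℕ) + 1)
      else if (i : ℕ) + 1 = (j : ℕ) ∨ (j : ℕ) + 1 = (i : ℕ) then 1 else 0) :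
    ∃ b : ℤ, c 0 = ((-1) ^ l * A.det) • c l + b • c (l + 1) := by
  have key : ∀ k, k ≤ l → ∃ b : ℤ,
      c (l - k) = ((-1) ^ k * (tri k (fun i => e (l - k + 1 + i))).det) • c l
        + b • c (l + 1) := by
    intro k
    induction k using Nat.strong_induction_on with
    | _ k ih =>
      obtain _ | (_ | k) := k
      ·
        intro _
        refine ⟨0, ?_⟩
        simp [tri, Matrix.det_fin_zero]
      · intro _
        refine ⟨-1, ?_⟩
        have h := hrec l hl le_rfl
        have hdet : (tri 1 (fun i => e (l - 1 + 1 + i))).det = e l := by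
          rw [show (tri 1 (fun i => e (l - 1 + 1 + i))).det
            = e (l - 1 + 1 + 0) from by simp [tri, Matrix.det_fin_one]]
          congr 1; omega
        rw [hdet]
        have h' : c (l - 1) = -(e l • c l) - c (l + 1) := by
          rw [eq_sub_iff_add_eq, eq_neg_iff_add_eq_zero]
          calc c (l - 1) + c (l + 1) + e l • c l
              = c (l - 1) + e l • c l + c (l + 1) := by abel
            _ = 0 := h
        rw [h']
        module
      · intro hk
        obtain ⟨b1, hb1⟩ := ih (k + 1) (by omega) (by omega)
        obtain ⟨b0, hb0⟩ := ih k (by omega) (by omega)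
        have hdet : (tri (k + 2) (fun i => e (l - (k + 2) + 1 + i))).det
            = e (l - (k + 1)) * (tri (k + 1) (fun i => e (l - (k + 1) + 1 + i))).det
              - (tri k (fun i => e (l - k + 1 + i))).det := by
          have hfun1 : (fun i => e (l - (k + 2) + 1 + (i + 1)))
              = (fun i => e (l - (k + 1) + 1 + i)) :=
            funext fun i => congrArg e (by omega)
          have hfun2 : (fun i => e (l - (k + 2) + 1 + (i + 2)))
              = (fun i => e (l - k + 1 + i)) :=
            funext fun i => congrArg e (by omega)
          rw [tri_det_rec, hfun1, hfun2,
            show l - (k + 2) + 1 + 0 = l - (k + 1) by omega]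
        have h := hrec (l - (k + 1)) (by omega) (by omega)
        rw [show l - (k + 1) - 1 = l - (k + 2) from by omega,
            show l - (k + 1) + 1 = l - k from by omega] at h
        have h' : c (l - (k + 2)) = -(e (l - (k + 1)) • c (l - (k + 1))) - c (l - k) := by
          rw [eq_sub_iff_add_eq, eq_neg_iff_add_eq_zero]
          calc c (l - (k + 2)) + c (l - k) + e (l - (k + 1)) • c (l - (k + 1))
              = c (l - (k + 2)) + e (l - (k + 1)) • c (l - (k + 1)) + c (l - k) := by abel
            _ = 0 := h
        refine ⟨-(e (l - (k + 1))) * b1 - b0, ?_⟩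
        rw [hdet, h', hb1, hb0]
        module
  obtain ⟨b, hb⟩ := key l le_rfl
  refine ⟨b, ?_⟩
  have hAeq : A = tri l (fun i => e (l - l + 1 + i)) := by
    ext i j
    rw [hA]
    simp only [tri, Matrix.of_apply]
    congr 1
    · congr 1; omega
  rw [hAeq]
  simpa using hb
end

section
/- Let S¹ = {z ∈ ℂ : |z| = 1} and D = {z ∈ ℂ : |z| ≤ 1}. Let φ₀ and φ₁ be homeomorphisms of S¹ × D onto itself that commute with the first projection, i.e. φ_k(θ, z) = (θ, φ̲_k(θ, z)), and that map the torus S¹ × S¹ onto itself. Assume the restrictions of φ₀ and φ₁ to S¹ × S¹ are each homotopic to the identity of S¹ × S¹. Then there exists a homeomorphism Φ of [0,1] × S¹ × D onto itself that commutes with the first two projections, i.e. Φ(t, θ, z) = (t, θ, Φ̲_t(θ, z)), such that Φ̲₀ = φ̲₀, Φ̲₁ = φ̲₁, and Φ̲_t(θ, z) = z for all t ∈ [1/3, 2/3] and all (θ, z) ∈ S¹ × D. -/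
/-!
Lifting through `exp : ℝ → S¹` the homotopy from `φₖ` on the boundary torus to the identity
writes `φₖ (θ, w) = (θ, w * exp (i Hₖ (θ, w)))` for `|w| = 1`. Each `φₖ` is then isotoped to the
identity through fibered homeomorphisms: first by the Alexander trick, which shrinks `φₖ` into the
disc of radius `1 - r` and fills the annulus outside with the radial extension of its boundary
map; then through the boundary twists `w ↦ w * exp (i c Hₖ (θ, w))`, `c` going from `1` to `0`.
The twists stay bijective because, on the universal cover, `x ↦ x + c Hₖ (θ, exp (i x))` is a
convex combination of the identity and of a lift of a circle homeomorphism, hence strictly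
increasing. Running the isotopy of `φ₀` on `[0, 1/3]` and that of `φ₁` backwards on `[2/3, 1]`
gives `Φ`, a continuous bijection of a compact space, hence a homeomorphism.
-/

/-- The unit circle `S¹ ⊆ ℂ`. -/
abbrev S1 : Set ℂ := Metric.sphere 0 1

/-- The closed unit disc `D ⊆ ℂ`. -/
abbrev Disk : Set ℂ := Metric.closedBall 0 1

/-- The inclusion of the torus `S¹ × S¹` into `S¹ × D`. -/
def torusIncl (q : ↥S1 × ↥S1) : ↥S1 × ↥Disk :=
  (q.1, ⟨(q.2 : ℂ), Metric.sphere_subset_closedBall q.2.2⟩)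

open Set Function Filter Topology Metric Real

theorem continuous_mul_of_norm_le {X R : Type*} [TopologicalSpace X] [NonUnitalSeminormedRing R]
    {f g : X → R} {C : ℝ} (hf : Continuous f) (hg : ∀ x, ‖g x‖ ≤ C)
    (hgf : ∀ x, f x ≠ 0 → ContinuousAt g x) : Continuous fun x => f x * g x := by
  refine continuous_iff_continuousAt.2 fun x => ?_
  by_cases hx : f x = 0
  · have : Tendsto (fun y => f y * g y) (𝓝 x) (𝓝 0) :=
      (hx ▸ hf.tendsto x).zero_mul_isBoundedUnder_le ⟨C, eventually_map.2 (.of_forall hg)⟩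
    simpa [ContinuousAt, hx] using this
  · exact hf.continuousAt.mul (hgf x hx)

theorem Set.BijOn.union_of_disjoint {α β : Type*} {f : α → β} {s₁ s₂ : Set α} {t₁ t₂ : Set β}
    (h₁ : BijOn f s₁ t₁) (h₂ : BijOn f s₂ t₂) (ht : Disjoint t₁ t₂) :
    BijOn f (s₁ ∪ s₂) (t₁ ∪ t₂) :=
  have hs : Disjoint s₁ s₂ := disjoint_left.2 fun _ hx₁ hx₂ =>
    disjoint_left.1 ht (h₁.mapsTo hx₁) (h₂.mapsTo hx₂)
  h₁.union h₂ <| (injOn_union hs).2 ⟨h₁.injOn, h₂.injOn, fun _ hx _ hy =>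
    ht.ne_of_mem (h₁.mapsTo hx) (h₂.mapsTo hy)⟩

section

variable {Q : ℝ → ℝ}

theorem strictMono_id_add_of_injective (hQ : Continuous Q) {p : ℝ} (hp : 0 < p)
    (hper : Periodic Q p) (hinj : Injective fun x => x + Q x) : StrictMono fun x => x + Q x := by
  refine ((continuous_id.add hQ).strictMono_of_inj hinj).resolve_right fun hanti => ?_
  have := hanti hp
  have hQp : Q p = Q 0 := by simpa using hper 0
  simp only [Pi.add_apply, id, hQp] at this
  linarith

theorem StrictMono.id_add_mul (hQ : StrictMono fun x => x + Q x) {c : ℝ} (hc₀ : 0 ≤ c)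
    (hc₁ : c ≤ 1) : StrictMono fun x => x + c * Q x := by
  intro a b hab
  have hB : a + Q a < b + Q b := hQ hab
  rcases hc₀.eq_or_lt with rfl | hc
  · simpa using hab
  · show a + c * Q a < b + c * Q b
    nlinarith [mul_pos hc (sub_pos.2 hB), mul_nonneg (sub_nonneg.2 hc₁) (sub_pos.2 hab).le]

end

namespace Circle

theorem injective_id_add_of_injective_mul_exp {h : Circle → ℝ}
    (hinj : Injective fun w => w * exp (h w)) : Injective fun x => x + h (exp x) := by
  intro x y hxy
  have hexp : exp x = exp y := hinj (by simpa [exp_add] using congrArg exp hxy)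
  obtain ⟨m, rfl⟩ := exp_eq_exp.1 hexp
  simp only [hexp] at hxy
  linarith

theorem bijective_of_strictMono_lift {g : Circle → Circle} {L : ℝ → ℝ} (hL : StrictMono L)
    (hLc : Continuous L) (hper : Periodic (fun x => L x - x) (2 * π))
    (hg : ∀ x, g (exp x) = exp (L x)) : Bijective g := by
  have hLper (x : ℝ) (m : ℤ) : L (x + m * (2 * π)) = L x + m * (2 * π) := by
    linarith [(hper.int_mul m) x]
  constructor
  · intro w₁ w₂ hw
    obtain ⟨x₁, rfl⟩ := exp_surjective w₁
    obtain ⟨x₂, rfl⟩ := exp_surjective w₂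
    rw [hg, hg, exp_eq_exp] at hw
    obtain ⟨m, hm⟩ := hw
    rw [hL.injective (hm.trans (hLper x₂ m).symm), periodic_exp.int_mul m]
  · intro w
    obtain ⟨y, rfl⟩ := exp_surjective w
    -- `L` maps `[0, 2π]` onto `[L 0, L 0 + 2π]`, which contains a representative of `y` mod `2π`
    have hy : toIcoMod two_pi_pos (L 0) y ∈ Icc (L 0) (L (2 * π)) := by
      rw [show L (2 * π) = L 0 + 2 * π by simpa using hLper 0 1]
      exact Ico_subset_Icc_self (toIcoMod_mem_Ico _ _ _)
    obtain ⟨x, -, hx⟩ := intermediate_value_Icc two_pi_pos.le hLc.continuousOn hy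
    refine ⟨exp x, ?_⟩
    rw [hg, hx, exp_eq_exp]
    exact ⟨-toIcoDiv two_pi_pos (L 0) y, by
      push_cast; linarith [self_sub_toIcoMod_eq_mul two_pi_pos (L 0) y]⟩

theorem bijective_mul_exp_mul_of_injective {h : Circle → ℝ} (hh : Continuous h)
    (hinj : Injective fun w => w * exp (h w)) {c : ℝ} (hc₀ : 0 ≤ c) (hc₁ : c ≤ 1) :
    Bijective fun w => w * exp (c * h w) := by
  have hQ : Continuous (h ∘ exp) := hh.comp exp.continuous
  have hper : Periodic (h ∘ exp) (2 * π) := fun x => by simp [periodic_exp x]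
  have hmono := (strictMono_id_add_of_injective hQ two_pi_pos hper
    (injective_id_add_of_injective_mul_exp hinj)).id_add_mul hc₀ hc₁
  refine bijective_of_strictMono_lift hmono (by fun_prop) (fun x => ?_) fun x => ?_
  · simp only [add_sub_cancel_left, comp_apply, periodic_exp x]
  · simp [exp_add]

theorem exists_lift_of_homotopy_to_one {A : Type*} [TopologicalSpace A]
    (F : C(unitInterval × A, Circle)) (hF : ∀ a, F (1, a) = 1) :
    ∃ L : C(A, ℝ), ∀ a, exp (L a) = F (0, a) := by
  let G : C(unitInterval × A, Circle) := F.comp ⟨fun x => (unitInterval.symm x.1, x.2), by fun_prop⟩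
  let lift := isCoveringMap_exp.liftHomotopy G (.const A 0) fun a => by simp [G, hF]
  refine ⟨lift.comp ⟨fun a => (1, a), by fun_prop⟩, fun a => ?_⟩
  simpa [G] using congrFun (isCoveringMap_exp.liftHomotopy_lifts G _ _) (1, a)

noncomputable def normalize (z : ℂ) : Circle :=
  if hz : z = 0 then 1 else ⟨z / ‖z‖, by simp [Submonoid.unitSphere, hz]⟩

theorem coe_normalize {z : ℂ} (hz : z ≠ 0) : (normalize z : ℂ) = z / ‖z‖ := by
  simp [normalize, hz]

theorem norm_mul_normalize (z : ℂ) : ‖z‖ * (normalize z : ℂ) = z := by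
  rcases eq_or_ne z 0 with rfl | hz
  · simp
  · rw [coe_normalize hz, mul_div_cancel₀ _ (by simpa using hz)]

theorem normalize_ofReal_mul {r : ℝ} (hr : 0 < r) (z : ℂ) : normalize (r * z) = normalize z := by
  rcases eq_or_ne z 0 with rfl | hz
  · simp
  · have hrz : (r : ℂ) * z ≠ 0 := mul_ne_zero (by exact_mod_cast hr.ne') hz
    ext
    rw [coe_normalize hrz, coe_normalize hz, norm_mul, Complex.norm_real, Real.norm_of_nonneg hr.le]
    push_cast
    rw [mul_div_mul_left _ _ (by exact_mod_cast hr.ne')]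

theorem normalize_coe (w : Circle) : normalize w = w := by
  ext; rw [coe_normalize (coe_ne_zero w), norm_coe, Complex.ofReal_one, div_one]

theorem continuousAt_normalize {z : ℂ} (hz : z ≠ 0) : ContinuousAt normalize z := by
  have : (fun w => w / (‖w‖ : ℂ)) =ᶠ[𝓝 z] fun w => (normalize w : ℂ) :=
    eventually_ne_nhds hz |>.mono fun w hw => (coe_normalize hw).symm
  exact tendsto_subtype_rng.2 (ContinuousAt.congr (by fun_prop (disch := simpa)) this)

theorem bijOn_norm_mul_normalize {u : Circle → Circle} (hu : Bijective u) {T : Set ℝ}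
    (hT : 0 ∉ T) :
    BijOn (fun z : ℂ => (‖z‖ * u (normalize z) : ℂ)) {z | ‖z‖ ∈ T} {z | ‖z‖ ∈ T} := by
  have hnorm (z : ℂ) (w : Circle) : ‖(‖z‖ : ℂ) * w‖ = ‖z‖ := by simp [norm_coe]
  have hpos {z : ℂ} (hz : ‖z‖ ∈ T) : 0 < ‖z‖ :=
    (norm_nonneg z).lt_of_ne fun h => hT (h ▸ hz)
  refine ⟨fun z hz => by simpa only [mem_ofPred_eq, hnorm] using hz, fun z₁ hz₁ z₂ _ h => ?_,
    fun y hy => ?_⟩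
  · simp only at h
    have hn : ‖z₁‖ = ‖z₂‖ := by simpa only [mem_ofPred_eq, hnorm] using congrArg norm h
    have hne : (‖z₁‖ : ℂ) ≠ 0 := by exact_mod_cast (hpos hz₁).ne'
    rw [hn] at h hne
    rw [← norm_mul_normalize z₁, ← norm_mul_normalize z₂, hn,
      hu.injective (coe_injective (mul_left_cancel₀ hne h))]
  · obtain ⟨w, hw⟩ := hu.surjective (normalize y)
    have hyw : normalize ((‖y‖ : ℂ) * w) = w := by
      rw [normalize_ofReal_mul (hpos hy), normalize_coe]
    refine ⟨(‖y‖ : ℂ) * w, by simpa only [mem_ofPred_eq, hnorm] using hy, ?_⟩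
    simp only [hyw, hnorm, hw, norm_mul_normalize]

end Circle



theorem bijOn_homothety_conj {f : ℂ → ℂ} (hf : BijOn f Disk Disk) {ρ : ℝ} (hρ : 0 ≤ ρ) :
    BijOn (fun z => ρ * f (z / ρ)) (closedBall 0 ρ) (closedBall 0 ρ) := by
  rcases hρ.eq_or_lt with rfl | hρ
  · simp
  have hρ' : (ρ : ℂ) ≠ 0 := by exact_mod_cast hρ.ne'
  have hdiv {z : ℂ} : z / ρ ∈ Disk ↔ z ∈ closedBall 0 ρ := by
    simp [div_le_one hρ, abs_of_pos hρ]
  have hmul {z : ℂ} : ρ * z ∈ closedBall 0 ρ ↔ z ∈ Disk := by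
    simp [abs_of_pos hρ, mul_le_iff_le_one_right hρ]
  refine ⟨fun z hz => hmul.2 (hf.mapsTo (hdiv.2 hz)), fun z₁ hz₁ z₂ hz₂ h => ?_, fun y hy => ?_⟩
  · have := hf.injOn (hdiv.2 hz₁) (hdiv.2 hz₂) (mul_left_cancel₀ hρ' h)
    rwa [div_left_inj' hρ'] at this
  · obtain ⟨x, hx, hfx⟩ := hf.surjOn (hdiv.2 hy)
    refine ⟨ρ * x, hmul.2 hx, ?_⟩
    simp only [mul_div_cancel_left₀ _ hρ', hfx, mul_div_cancel₀ _ hρ']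

noncomputable def alexander (f : ℂ → ℂ) (u : Circle → Circle) (ρ : ℝ) (z : ℂ) : ℂ :=
  if ‖z‖ ≤ ρ then ρ * f (z / ρ) else ‖z‖ * u (Circle.normalize z)

theorem alexander_one {f : ℂ → ℂ} (u : Circle → Circle) {z : ℂ} (hz : z ∈ Disk) :
    alexander f u 1 z = f z := by
  simp [alexander, mem_closedBall_zero_iff.1 hz]

theorem alexander_zero (f : ℂ → ℂ) {u : Circle → Circle} (hu : ∀ w, u w = w) (z : ℂ) :
    alexander f u 0 z = z := by
  by_cases hz : ‖z‖ ≤ 0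
  · simp [alexander, norm_le_zero_iff.1 hz]
  · simp [alexander, hz, hu, Circle.norm_mul_normalize]

theorem bijOn_alexander {f : ℂ → ℂ} {u : Circle → Circle} (hf : BijOn f Disk Disk)
    (hu : Bijective u) {ρ : ℝ} (hρ₀ : 0 ≤ ρ) (hρ₁ : ρ ≤ 1) :
    BijOn (alexander f u ρ) Disk Disk := by
  have inner : BijOn (alexander f u ρ) (closedBall 0 ρ) (closedBall 0 ρ) :=
    (bijOn_homothety_conj hf hρ₀).congr fun z hz =>
      (if_pos (mem_closedBall_zero_iff.1 hz)).symm
  have hannulus : Disk \ closedBall 0 ρ = {z | ‖z‖ ∈ Ioc ρ 1} := by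
    ext z; simp [and_comm]
  have outer : BijOn (alexander f u ρ) (Disk \ closedBall 0 ρ) (Disk \ closedBall 0 ρ) := by
    rw [hannulus]
    have h0 : (0 : ℝ) ∉ Ioc ρ 1 := fun h => hρ₀.not_gt h.1
    exact (Circle.bijOn_norm_mul_normalize hu h0).congr fun z hz => (if_neg (not_le.2 hz.1)).symm
  simpa [union_sdiff_cancel (closedBall_subset_closedBall hρ₁)] using
    inner.union_of_disjoint outer disjoint_sdiff_right

theorem continuous_alexander {X : Type*} [TopologicalSpace X] {f : X → ℂ → ℂ}
    {u : X → Circle → Circle} {ρ : X → ℝ} {z : X → ℂ} (hf : Continuous (uncurry f))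
    (hf₁ : ∀ x w, ‖f x w‖ ≤ 1) (hu : Continuous (uncurry u)) (hρ : Continuous ρ)
    (hz : Continuous z) (hfu : ∀ x (w : Circle), 0 < ρ x → f x w = u x w) :
    Continuous fun x => alexander (f x) (u x) (ρ x) (z x) := by
  refine Continuous.if_le ?_ ?_ (by fun_prop) hρ fun x hx => ?_
  · refine continuous_mul_of_norm_le (by fun_prop) (fun x => hf₁ x _) fun x hx => ?_
    exact hf.continuousAt.comp (f := fun x => (x, z x / ρ x))
      (continuousAt_id.prodMk (hz.continuousAt.div (by fun_prop) hx))
  · refine continuous_mul_of_norm_le (by fun_prop) (fun x => (Circle.norm_coe _).le)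
      fun x hx => ?_
    exact continuous_subtype_val.continuousAt.comp <| hu.continuousAt.comp
      (f := fun x => (x, Circle.normalize (z x))) <| continuousAt_id.prodMk <|
      (Circle.continuousAt_normalize (by simpa using hx)).comp hz.continuousAt
  · rcases (norm_nonneg (z x)).eq_or_lt with h0 | hpos
    · simp [← hx, norm_eq_zero.1 h0.symm]
    · rw [← hx, ← Circle.coe_normalize (norm_pos_iff.1 hpos), hfu x _ (hx ▸ hpos)]

noncomputable def diskRetract (z : ℂ) : ↥Disk :=
  ⟨z / (max 1 ‖z‖ : ℝ), by
    rw [mem_closedBall_zero_iff, norm_div, Complex.norm_real, Real.norm_of_nonneg (by positivity)]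
    exact div_le_one_of_le₀ (le_max_right _ _) (by positivity)⟩

theorem continuous_diskRetract : Continuous diskRetract :=
  .subtype_mk (continuous_id.div (by fun_prop) fun z => by simp [(lt_max_of_lt_left one_pos).ne']) _

theorem diskRetract_coe (z : ↥Disk) : diskRetract z = z := by
  ext
  simp [diskRetract, max_eq_left (mem_closedBall_zero_iff.1 z.2)]

section Fibered

variable (φ : (↥S1 × ↥Disk) ≃ₜ (↥S1 × ↥Disk))

noncomputable def fiberMap (θ : ↥S1) (z : ℂ) : ℂ := (φ (θ, diskRetract z)).2

theorem continuous_fiberMap : Continuous (uncurry (fiberMap φ)) := by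
  unfold fiberMap
  have := continuous_diskRetract
  fun_prop

theorem norm_fiberMap_le (θ : ↥S1) (z : ℂ) : ‖fiberMap φ θ z‖ ≤ 1 :=
  mem_closedBall_zero_iff.1 (φ _).2.2

theorem fiberMap_coe (θ : ↥S1) (z : ↥Disk) : fiberMap φ θ z = (φ (θ, z)).2 := by
  rw [fiberMap, diskRetract_coe]

theorem bijOn_fiberMap (hp : ∀ p, (φ p).1 = p.1) (θ : ↥S1) : BijOn (fiberMap φ θ) Disk Disk := by
  refine ⟨fun z _ => (φ _).2.2, fun z hz z' hz' h => ?_, fun y hy => ?_⟩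
  · lift z to ↥Disk using hz
    lift z' to ↥Disk using hz'
    rw [fiberMap_coe, fiberMap_coe] at h
    have : φ (θ, z) = φ (θ, z') := Prod.ext (by rw [hp, hp]) (Subtype.ext h)
    exact congrArg (fun p => (p.2 : ℂ)) (φ.injective this)
  · obtain ⟨p, hp'⟩ := φ.surjective (θ, ⟨y, hy⟩)
    have hθ : p.1 = θ := (hp p).symm.trans (congrArg Prod.fst hp')
    refine ⟨p.2, p.2.2, ?_⟩
    rw [fiberMap_coe, ← hθ, hp']

def IsBoundaryLift (H : C(↥S1 × Circle, ℝ)) : Prop :=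
  ∀ θ (w : Circle), fiberMap φ θ w = w * Circle.exp (H (θ, w))

theorem exists_isBoundaryLift
    (hh : ∃ ψ : C(↥S1 × ↥S1, ↥S1 × ↥S1),
      (∀ q, torusIncl (ψ q) = φ (torusIncl q)) ∧ ψ.Homotopic (ContinuousMap.id _)) :
    ∃ H, IsBoundaryLift φ H := by
  obtain ⟨ψ, hψ, ⟨K⟩⟩ := hh
  let toS1 : C(Circle, ↥S1) := ⟨fun w => ⟨w, w.2⟩, .subtype_mk continuous_subtype_val _⟩
  -- `K` divided by the fiber coordinate contracts `w ↦ (ψ (θ, w)).2 / w` to `1`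
  let F : C(unitInterval × ↥S1 × Circle, Circle) :=
    ⟨fun x => ⟨(K (x.1, x.2.1, toS1 x.2.2)).2, (K _).2.2⟩ * x.2.2⁻¹, by
      refine .mul (.subtype_mk ?_ _) (by fun_prop)
      fun_prop⟩
  obtain ⟨L, hL⟩ := Circle.exists_lift_of_homotopy_to_one F fun a => by
    simp only [F, ContinuousMap.coe_mk, K.apply_one]
    exact mul_inv_cancel a.2
  refine ⟨L, fun θ w => ?_⟩
  have hψw : fiberMap φ θ w = (ψ (θ, toS1 w)).2 := by
    rw [show (w : ℂ) = (torusIncl (θ, toS1 w)).2 from rfl, fiberMap_coe]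
    exact (congrArg (fun p => (p.2 : ℂ)) (hψ (θ, toS1 w))).symm
  rw [hψw, hL]
  simp only [F, ContinuousMap.coe_mk, K.apply_zero]
  change _ = (w : ℂ) * ((ψ (θ, toS1 w)).2 * (w : ℂ)⁻¹)
  field_simp [Circle.coe_ne_zero w]

variable (H : C(↥S1 × Circle, ℝ))

noncomputable def twist (c : ℝ) (θ : ↥S1) (w : Circle) : Circle :=
  w * Circle.exp (c * H (θ, w))

/-- For `r ∈ [0, 1]`, the Alexander trick shrinking `φ` into the disc of radius `1 - r`; for
`r ∈ [1, 2]`, the boundary twist by `exp (H)` undone linearly; the identity for `r ≥ 2`. -/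
noncomputable def isotopy (r : ℝ) (θ : ↥S1) : ℂ → ℂ :=
  alexander (fiberMap φ θ) (twist H (projIcc 0 1 zero_le_one (2 - r)) θ)
    (projIcc 0 1 zero_le_one (1 - r))

theorem isotopy_zero (θ : ↥S1) (z : ↥Disk) : isotopy φ H 0 θ z = (φ (θ, z)).2 := by
  rw [isotopy, sub_zero, sub_zero, projIcc_of_right_le _ le_rfl, alexander_one _ z.2, fiberMap_coe]

theorem isotopy_of_two_le {r : ℝ} (hr : 2 ≤ r) (θ : ↥S1) (z : ℂ) : isotopy φ H r θ z = z := by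
  rw [isotopy, projIcc_of_le_left _ (by linarith), projIcc_of_le_left _ (by linarith)]
  exact alexander_zero _ (fun w => by simp [twist]) z

variable {φ H}

theorem bijOn_isotopy (hp : ∀ p, (φ p).1 = p.1) (hH : IsBoundaryLift φ H) (r : ℝ) (θ : ↥S1) :
    BijOn (isotopy φ H r θ) Disk Disk := by
  have hf := bijOn_fiberMap φ hp θ
  have hinj : Injective fun w => w * Circle.exp (H (θ, w)) := fun w₁ w₂ h => by
    have := congrArg ((↑) : Circle → ℂ) h
    rw [Circle.coe_mul, Circle.coe_mul, ← hH θ w₁, ← hH θ w₂] at this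
    exact Circle.coe_injective <| hf.injOn (sphere_subset_closedBall w₁.2)
      (sphere_subset_closedBall w₂.2) this
  have hu := Circle.bijective_mul_exp_mul_of_injective (by fun_prop) hinj
    (projIcc 0 1 zero_le_one (2 - r)).2.1 (projIcc 0 1 zero_le_one (2 - r)).2.2
  exact bijOn_alexander hf hu (projIcc 0 1 zero_le_one (1 - r)).2.1
    (projIcc 0 1 zero_le_one (1 - r)).2.2

theorem continuous_isotopy (hH : IsBoundaryLift φ H) {X : Type*} [TopologicalSpace X]
    {r : X → ℝ} {θ : X → ↥S1} {z : X → ℂ} (hr : Continuous r) (hθ : Continuous θ)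
    (hz : Continuous z) :
    Continuous fun x => isotopy φ H (r x) (θ x) (z x) := by
  refine continuous_alexander (f := fun x => fiberMap φ (θ x)) (u := fun x => twist H _ (θ x))
    ((continuous_fiberMap φ).comp (f := fun p : X × ℂ => (θ p.1, p.2)) (by fun_prop))
    (fun x => norm_fiberMap_le φ _) ?_ (by fun_prop) hz fun x w hρ => ?_
  · have := continuous_projIcc (a := (0 : ℝ)) (b := 1) (h := zero_le_one)
    show Continuous fun p : X × Circle =>
      p.2 * Circle.exp (projIcc (0 : ℝ) 1 zero_le_one (2 - r p.1) * H (θ p.1, p.2))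
    fun_prop
  · have : projIcc (0 : ℝ) 1 zero_le_one (2 - r x) = 1 := by
      refine projIcc_of_right_le _ ?_
      by_contra! h
      rw [projIcc_of_le_left _ (by linarith)] at hρ
      exact hρ.false
    simp [twist, this, hH (θ x) w]

end Fibered

section Join

variable {φ₀ φ₁ : (↥S1 × ↥Disk) ≃ₜ (↥S1 × ↥Disk)} {H₀ H₁ : C(↥S1 × Circle, ℝ)}

variable (φ₀ φ₁ H₀ H₁) in
noncomputable def joinFiber (t : unitInterval) (θ : ↥S1) (z : ℂ) : ℂ :=
  if (t : ℝ) ≤ 1 / 2 then isotopy φ₀ H₀ (6 * t) θ z else isotopy φ₁ H₁ (6 * (1 - t)) θ z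

theorem joinFiber_zero (θ : ↥S1) (z : ↥Disk) : joinFiber φ₀ φ₁ H₀ H₁ 0 θ z = (φ₀ (θ, z)).2 := by
  simp [joinFiber, isotopy_zero]

theorem joinFiber_one (θ : ↥S1) (z : ↥Disk) : joinFiber φ₀ φ₁ H₀ H₁ 1 θ z = (φ₁ (θ, z)).2 := by
  rw [joinFiber, if_neg (by norm_num)]
  simp [isotopy_zero]

theorem joinFiber_of_mem_Icc {t : unitInterval} (ht : (t : ℝ) ∈ Icc (1 / 3) (2 / 3)) (θ : ↥S1)
    (z : ℂ) : joinFiber φ₀ φ₁ H₀ H₁ t θ z = z := by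
  unfold joinFiber
  split_ifs
  · exact isotopy_of_two_le _ _ (by linarith [ht.1]) θ z
  · exact isotopy_of_two_le _ _ (by linarith [ht.2]) θ z

theorem bijOn_joinFiber (hp₀ : ∀ p, (φ₀ p).1 = p.1) (hp₁ : ∀ p, (φ₁ p).1 = p.1)
    (hH₀ : IsBoundaryLift φ₀ H₀) (hH₁ : IsBoundaryLift φ₁ H₁) (t : unitInterval) (θ : ↥S1) :
    BijOn (joinFiber φ₀ φ₁ H₀ H₁ t θ) Disk Disk := by
  unfold joinFiber
  split_ifs
  · exact bijOn_isotopy hp₀ hH₀ _ θ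
  · exact bijOn_isotopy hp₁ hH₁ _ θ

theorem continuous_joinFiber (hH₀ : IsBoundaryLift φ₀ H₀) (hH₁ : IsBoundaryLift φ₁ H₁) :
    Continuous fun x : unitInterval × ↥S1 × ℂ => joinFiber φ₀ φ₁ H₀ H₁ x.1 x.2.1 x.2.2 := by
  refine Continuous.if_le (continuous_isotopy hH₀ (by fun_prop) (by fun_prop) (by fun_prop))
    (continuous_isotopy hH₁ (by fun_prop) (by fun_prop) (by fun_prop)) (by fun_prop)
    continuous_const fun x hx => ?_
  rw [isotopy_of_two_le _ _ (by linarith), isotopy_of_two_le _ _ (by linarith)]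

end Join

theorem join_fibered_homeos_of_torus_general
    (φ₀ φ₁ : (↥S1 × ↥Disk) ≃ₜ (↥S1 × ↥Disk))
    (hp₀ : ∀ p, (φ₀ p).1 = p.1) (hp₁ : ∀ p, (φ₁ p).1 = p.1)
    (hh₀ : ∃ ψ : C(↥S1 × ↥S1, ↥S1 × ↥S1),
      (∀ q, torusIncl (ψ q) = φ₀ (torusIncl q)) ∧
      ψ.Homotopic (ContinuousMap.id _))
    (hh₁ : ∃ ψ : C(↥S1 × ↥S1, ↥S1 × ↥S1),
      (∀ q, torusIncl (ψ q) = φ₁ (torusIncl q)) ∧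
      ψ.Homotopic (ContinuousMap.id _)) :
    ∃ Φ : (unitInterval × ↥S1 × ↥Disk) ≃ₜ (unitInterval × ↥S1 × ↥Disk),
      (∀ x, (Φ x).1 = x.1) ∧
      (∀ x, (Φ x).2.1 = x.2.1) ∧
      (∀ p : ↥S1 × ↥Disk, (Φ (0, p)).2 = φ₀ p) ∧
      (∀ p : ↥S1 × ↥Disk, (Φ (1, p)).2 = φ₁ p) ∧
      (∀ (t : unitInterval) (p : ↥S1 × ↥Disk),
        (1/3 : ℝ) ≤ (t : ℝ) → (t : ℝ) ≤ (2/3 : ℝ) → (Φ (t, p)).2 = p) := by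
  obtain ⟨H₀, hH₀⟩ := exists_isBoundaryLift φ₀ hh₀
  obtain ⟨H₁, hH₁⟩ := exists_isBoundaryLift φ₁ hh₁
  have hbij := bijOn_joinFiber hp₀ hp₁ hH₀ hH₁
  let e : (unitInterval × ↥S1 × ↥Disk) ≃ (unitInterval × ↥S1 × ↥Disk) :=
    .prodShear (.refl _) fun t => .prodShear (.refl _) fun θ => (hbij t θ).equiv
  have he : Continuous e := by
    refine continuous_fst.prodMk <| (continuous_fst.comp continuous_snd).prodMk <| .subtype_mk ?_ _
    exact (continuous_joinFiber hH₀ hH₁).comp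
      (f := fun x : unitInterval × ↥S1 × ↥Disk => (x.1, x.2.1, (x.2.2 : ℂ))) (by fun_prop)
  refine ⟨he.homeoOfEquivCompactToT2, fun _ => rfl, fun _ => rfl, fun p => ?_, fun p => ?_,
    fun t p ht₁ ht₂ => ?_⟩
  · exact Prod.ext (hp₀ p).symm (Subtype.ext (joinFiber_zero p.1 p.2))
  · exact Prod.ext (hp₁ p).symm (Subtype.ext (joinFiber_one p.1 p.2))
  · exact Prod.ext rfl (Subtype.ext (joinFiber_of_mem_Icc ⟨ht₁, ht₂⟩ p.1 p.2))

/-- Lemme "extenauxtore": two fibered homeomorphisms of `S¹ × D` preserving the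
boundary torus and homotopic to the identity there can be joined by a fibered
homeomorphism of `[0,1] × S¹ × D` which is the identity for `t ∈ [1/3, 2/3]`. -/
theorem join_fibered_homeos_of_torus
    (φ₀ φ₁ : (↥S1 × ↥Disk) ≃ₜ (↥S1 × ↥Disk))
    (hp₀ : ∀ p, (φ₀ p).1 = p.1) (hp₁ : ∀ p, (φ₁ p).1 = p.1)
    (ht₀ : ∀ p : ↥S1 × ↥Disk, ((p.2 : ℂ) ∈ S1) ↔ (((φ₀ p).2 : ℂ) ∈ S1))
    (ht₁ : ∀ p : ↥S1 × ↥Disk, ((p.2 : ℂ) ∈ S1) ↔ (((φ₁ p).2 : ℂ) ∈ S1))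
    (hh₀ : ∃ ψ : C(↥S1 × ↥S1, ↥S1 × ↥S1),
      (∀ q, torusIncl (ψ q) = φ₀ (torusIncl q)) ∧
      ψ.Homotopic (ContinuousMap.id _))
    (hh₁ : ∃ ψ : C(↥S1 × ↥S1, ↥S1 × ↥S1),
      (∀ q, torusIncl (ψ q) = φ₁ (torusIncl q)) ∧
      ψ.Homotopic (ContinuousMap.id _)) :
    ∃ Φ : (unitInterval × ↥S1 × ↥Disk) ≃ₜ (unitInterval × ↥S1 × ↥Disk),
      (∀ x, (Φ x).1 = x.1) ∧
      (∀ x, (Φ x).2.1 = x.2.1) ∧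
      (∀ p : ↥S1 × ↥Disk, (Φ (0, p)).2 = φ₀ p) ∧
      (∀ p : ↥S1 × ↥Disk, (Φ (1, p)).2 = φ₁ p) ∧
      (∀ (t : unitInterval) (p : ↥S1 × ↥Disk),
        (1/3 : ℝ) ≤ (t : ℝ) → (t : ℝ) ≤ (2/3 : ℝ) → (Φ (t, p)).2 = p) :=
  join_fibered_homeos_of_torus_general φ₀ φ₁ hp₀ hp₁ hh₀ hh₁
end

section
/- Let g ≥ 1 and let F be the free group on the 2g generators u₁, v₁, …, u_g, v_g. Then the product of commutators w = [u₁, v₁][u₂, v₂]⋯[u_g, v_g] is not a proper power in F: there is no element θ ∈ F and no integer n ≥ 2 such that w = θⁿ. -/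
/-!
Send `u₁ ↦ x`, `v₁ ↦ y` and every other generator to `1` in the integer Heisenberg group, where
`⁅x, y⁆ = z` generates the centre; the product of commutators goes to `z`. There
`(a, b, c) ^ m = (m a, m b, m c + (m choose 2) a b)`, so an `m`-th power equal to `z` would have
`a = 0` and `m c = 1`, which is impossible for `m ≥ 2`.
-/

open scoped commutatorElement

/-- `⟨a, b, c⟩` stands for the unitriangular matrix `!![1, a, c; 0, 1, b; 0, 0, 1]`. -/
@[ext]
structure Heisenberg where
  a : ℤ
  b : ℤ
  c : ℤ

namespace Heisenberg

instance : Mul Heisenberg := ⟨fun p q => ⟨p.a + q.a, p.b + q.b, p.c + q.c + p.a * q.b⟩⟩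
instance : One Heisenberg := ⟨⟨0, 0, 0⟩⟩
instance : Inv Heisenberg := ⟨fun p => ⟨-p.a, -p.b, -p.c + p.a * p.b⟩⟩

@[simp] lemma mul_def (p q : Heisenberg) :
    p * q = ⟨p.a + q.a, p.b + q.b, p.c + q.c + p.a * q.b⟩ := rfl

lemma one_def : (1 : Heisenberg) = ⟨0, 0, 0⟩ := rfl

@[simp] lemma inv_def (p : Heisenberg) : p⁻¹ = ⟨-p.a, -p.b, -p.c + p.a * p.b⟩ := rfl

instance : Group Heisenberg where
  mul_assoc p q r := by simp only [mul_def]; ext <;> ring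
  one_mul p := by simp [one_def]
  mul_one p := by simp [one_def]
  inv_mul_cancel p := by simp only [inv_def, mul_def, one_def]; ext <;> ring

def x : Heisenberg := ⟨1, 0, 0⟩
def y : Heisenberg := ⟨0, 1, 0⟩
def z : Heisenberg := ⟨0, 0, 1⟩

lemma commutatorElement_x_y : ⁅x, y⁆ = z := by
  simp [commutatorElement_def, x, y, z]

lemma pow_def (p : Heisenberg) (m : ℕ) :
    p ^ m = ⟨m * p.a, m * p.b, m * p.c + m.choose 2 * p.a * p.b⟩ := by
  induction m with
  | zero => simp [one_def]
  | succ m ih =>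
    rw [pow_succ, ih, mul_def, Nat.choose_succ_succ', Nat.choose_one_right]
    ext <;> push_cast <;> ring

lemma pow_ne_z (p : Heisenberg) {m : ℕ} (hm : 2 ≤ m) : p ^ m ≠ z := by
  intro h
  rw [pow_def, z, Heisenberg.mk.injEq] at h
  obtain ⟨ha, -, hc⟩ := h
  have ha0 : p.a = 0 := (mul_eq_zero.mp ha).resolve_left (by omega)
  have hdvd : (m : ℤ) ∣ 1 := ⟨p.c, by simpa [ha0] using hc.symm⟩
  have := Int.eq_one_of_dvd_one (by positivity) hdvd
  omega

end Heisenberg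

open Heisenberg in
def firstHandleToHeisenberg (g : ℕ) : FreeGroup (Fin g × Bool) →* Heisenberg :=
  FreeGroup.lift fun p => if p.1.val = 0 then (if p.2 then y else x) else 1

lemma firstHandleToHeisenberg_prod_commutators {g : ℕ} (hg : 1 ≤ g) :
    firstHandleToHeisenberg g (List.ofFn fun i : Fin g =>
      ⁅FreeGroup.of (i, false), FreeGroup.of (i, true)⁆).prod = Heisenberg.z := by
  obtain ⟨g, rfl⟩ : ∃ g', g = g' + 1 := ⟨g - 1, by omega⟩
  have hfirst : firstHandleToHeisenberg (g + 1)
      ⁅FreeGroup.of ((0 : Fin (g + 1)), false), FreeGroup.of ((0 : Fin (g + 1)), true)⁆ =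
        Heisenberg.z := by
    simp [firstHandleToHeisenberg, map_commutatorElement, Heisenberg.commutatorElement_x_y]
  have hrest (i : Fin g) : firstHandleToHeisenberg (g + 1)
      ⁅FreeGroup.of (i.succ, false), FreeGroup.of (i.succ, true)⁆ = 1 := by
    simp [firstHandleToHeisenberg, map_commutatorElement]
  rw [map_list_prod, List.map_ofFn, List.ofFn_succ, List.prod_cons]
  simp only [Function.comp_apply, hfirst, hrest, List.ofFn_const, List.prod_replicate, one_pow,
    mul_one]

/-- The product of commutators `[u₁,v₁]⋯[u_g,v_g]` in the free group on
`u₁, v₁, …, u_g, v_g` is not a proper power. -/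
theorem prod_commutators_not_proper_power (g : ℕ) (hg : 1 ≤ g)
    (θ : FreeGroup (Fin g × Bool)) (n : ℤ) (hn : 2 ≤ n) :
    θ ^ n ≠ (List.ofFn fun i : Fin g =>
      ⁅FreeGroup.of (i, false), FreeGroup.of (i, true)⁆).prod := by
  lift n to ℕ using by omega
  intro h
  apply (firstHandleToHeisenberg g θ).pow_ne_z (m := n) (by omega)
  rw [← firstHandleToHeisenberg_prod_commutators hg, ← h, zpow_natCast, map_pow]
end
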